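/- Let H_t, H_l, G be mutually independent exponentials with means Ω_t, Ω_l, Ω_I > 0 (with no external interference Z' = 0). For β_l, β_t, ρ, ε, a_t > 0, define φ = (Ω_l + ρ β_l a_t Ω_t)/(Ω_l Ω_t). Then P( H_t > β_t(ε ρ G + 1) and H_l > β_l(ρ a_t H_t + 1) ) = e^{-β_l/Ω_l - β_t φ} / ( φ Ω_t (1 + ε ρ β_t φ Ω_I) ). -/

import Mathlib

/-!
Conditionally on `G = g` and `H_t = x`, the event `H_l > c + d x` has probability
`exp (-r_l (c + d x))`, an exponential in `x`. Integrating it against the law `Exp(r_t)` over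
`x > a + b g` yields an exponential tail of rate `κ = r_t + r_l d` (this is `φ` for the rates
`1 / Ω`), and what remains is the Laplace transform `E[exp (-κ b G)] = r_G / (r_G + κ b)` of the
exponential law.
-/

open MeasureTheory ProbabilityTheory Real Set
open scoped ENNReal

namespace MeasureTheory

lemma measurable_measure_Ioi (ν : Measure ℝ) : Measurable fun t => ν (Ioi t) :=
  Antitone.measurable fun _ _ hab => measure_mono (Ioi_subset_Ioi hab)

section

variable {α : Type*} [MeasurableSpace α] (μ : Measure α) (ν : Measure ℝ) [SFinite ν]
  {c : α → ℝ}

lemma Measure.prod_setOf_mem_and_lt (hc : Measurable c) {s : Set α} (hs : MeasurableSet s) :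
    μ.prod ν {p | p.1 ∈ s ∧ c p.1 < p.2} = ∫⁻ x in s, ν (Ioi (c x)) ∂μ := by
  have hmeas : MeasurableSet {p : α × ℝ | p.1 ∈ s ∧ c p.1 < p.2} :=
    (measurable_fst hs).inter (measurableSet_lt (hc.comp measurable_fst) measurable_snd)
  rw [Measure.prod_apply hmeas, ← lintegral_indicator hs]
  congr 1 with x
  by_cases hx : x ∈ s <;> simp [hx]
  rfl

lemma setLIntegral_prod_setOf_lt (hc : Measurable c) {F : α × ℝ → ℝ≥0∞} (hF : Measurable F) :
    ∫⁻ q in {q | c q.1 < q.2}, F q ∂μ.prod ν = ∫⁻ x, ∫⁻ y in Ioi (c x), F (x, y) ∂ν ∂μ := by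
  have hmeas : MeasurableSet {q : α × ℝ | c q.1 < q.2} :=
    measurableSet_lt (hc.comp measurable_fst) measurable_snd
  rw [← lintegral_indicator hmeas, lintegral_prod _ (hF.indicator hmeas).aemeasurable]
  congr 1 with x
  rw [← lintegral_indicator measurableSet_Ioi]
  rfl

end

end MeasureTheory

namespace ProbabilityTheory

lemma iIndepFun.map_prodMk_prodMk_eq_prod {ι Ω β : Type*} [MeasurableSpace Ω]
    [MeasurableSpace β] {μ : Measure Ω} [IsFiniteMeasure μ] {X : ι → Ω → β}
    (h : iIndepFun X μ) (hX : ∀ i, AEMeasurable (X i) μ) {i j k : ι}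
    (hij : i ≠ j) (hik : i ≠ k) (hjk : j ≠ k) :
    μ.map (fun ω => ((X i ω, X j ω), X k ω))
      = ((μ.map (X i)).prod (μ.map (X j))).prod (μ.map (X k)) := by
  rw [← (indepFun_iff_map_prod_eq_prod_map_map (hX i) (hX j)).1 (h.indepFun hij)]
  exact (indepFun_iff_map_prod_eq_prod_map_map ((hX i).prodMk (hX j)) (hX k)).1
    (h.indepFun_prodMk₀ hX i j k hik hjk)

lemma setLIntegral_Ioi_expMeasure_exp {r a c : ℝ} (hr : 0 ≤ r) (hra : 0 < r + a)
    (hc : 0 ≤ c) (b : ℝ) :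
    ∫⁻ x in Ioi c, ENNReal.ofReal (exp (-(a * x + b))) ∂expMeasure r
      = ENNReal.ofReal (r / (r + a) * exp (-((r + a) * c + b))) := by
  have hdens : ∀ x ∈ Ioi c, (exponentialPDF r * fun x => ENNReal.ofReal (exp (-(a * x + b)))) x
      = ENNReal.ofReal (r * exp (-b) * exp (-(r + a) * x)) := by
    intro x hx
    rw [Pi.mul_apply, exponentialPDF_of_nonneg (hc.trans hx.out.le),
      ← ENNReal.ofReal_mul (by positivity), mul_assoc, ← exp_add, mul_assoc, ← exp_add]
    congr 3
    ring
  have hint : IntegrableOn (fun x => exp (-(r + a) * x)) (Ioi c) :=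
    integrableOn_exp_mul_Ioi (by linarith) c
  change ∫⁻ x in Ioi c, _ ∂volume.withDensity (exponentialPDF r) = _
  rw [setLIntegral_withDensity_eq_setLIntegral_mul _ (f := exponentialPDF r)
      (measurable_exponentialPDFReal r).ennreal_ofReal (by fun_prop) measurableSet_Ioi,
    setLIntegral_congr_fun measurableSet_Ioi hdens,
    ← ofReal_integral_eq_lintegral_ofReal (hint.const_mul _) (ae_of_all _ fun x => by positivity),
    integral_const_mul, integral_exp_mul_Ioi (by linarith),
    show -((r + a) * c + b) = -(r + a) * c + -b by ring, exp_add]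
  field_simp

instance (r : ℝ) : SFinite (expMeasure r) :=
  inferInstanceAs (SFinite (volume.withDensity (gammaPDF 1 r)))

lemma expMeasure_Ioi {r c : ℝ} (hr : 0 < r) (hc : 0 ≤ c) :
    expMeasure r (Ioi c) = ENNReal.ofReal (exp (-(r * c))) := by
  simpa [hr.ne'] using setLIntegral_Ioi_expMeasure_exp (a := 0) hr.le (by simpa) hc 0

lemma ae_pos_expMeasure (r : ℝ) : ∀ᵐ x ∂expMeasure r, 0 < x := by
  change ∀ᵐ x ∂volume.withDensity (exponentialPDF r), 0 < x
  simp only [ae_iff, not_lt]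
  change volume.withDensity (exponentialPDF r) (Iic 0) = 0
  rw [withDensity_apply _ measurableSet_Iic, Measure.restrict_congr_set Iio_ae_eq_Iic.symm,
    lintegral_exponentialPDF_of_nonpos le_rfl]

lemma aemeasurable_of_map_eq_expMeasure {Ω : Type*} [MeasurableSpace Ω] {μ : Measure Ω}
    {f : Ω → ℝ} {r : ℝ} (hr : 0 < r) (h : μ.map f = expMeasure r) : AEMeasurable f μ :=
  .of_map_ne_zero (h ▸ (isProbabilityMeasure_expMeasure hr).ne_zero)

lemma lintegral_expMeasure_exp {r a : ℝ} (hr : 0 ≤ r) (hra : 0 < r + a) (b : ℝ) :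
    ∫⁻ x, ENNReal.ofReal (exp (-(a * x + b))) ∂expMeasure r
      = ENNReal.ofReal (r / (r + a) * exp (-b)) := by
  rw [← Measure.restrict_eq_self_of_ae_mem (s := Ioi 0) (ae_pos_expMeasure r),
    setLIntegral_Ioi_expMeasure_exp hr hra le_rfl, mul_zero, zero_add]

lemma expMeasure_prod_prod_setOf_add_mul_lt {rG rt rl a b c d : ℝ} (hrG : 0 < rG) (hrt : 0 < rt)
    (hrl : 0 < rl) (ha : 0 ≤ a) (hb : 0 ≤ b) (hc : 0 ≤ c) (hd : 0 ≤ d) :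
    ((expMeasure rG).prod (expMeasure rt)).prod (expMeasure rl)
        {p | a + b * p.1.1 < p.1.2 ∧ c + d * p.1.2 < p.2}
      = ENNReal.ofReal (rt / (rt + rl * d) * (rG / (rG + (rt + rl * d) * b))
          * exp (-(rl * c + (rt + rl * d) * a))) := by
  have hinner : ∀ g, 0 ≤ g →
      ∫⁻ x in Ioi (a + b * g), expMeasure rl (Ioi (c + d * x)) ∂expMeasure rt
        = ENNReal.ofReal (rt / (rt + rl * d))
          * ENNReal.ofReal (exp (-((rt + rl * d) * b * g + (rl * c + (rt + rl * d) * a)))) := by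
    intro g hg
    have hab : 0 ≤ a + b * g := by positivity
    calc _ = ∫⁻ x in Ioi (a + b * g), ENNReal.ofReal (exp (-(rl * d * x + rl * c)))
          ∂expMeasure rt := by
          refine setLIntegral_congr_fun measurableSet_Ioi fun x hx => ?_
          have hx : 0 ≤ x := hab.trans hx.out.le
          rw [expMeasure_Ioi hrl (by positivity)]
          congr 3
          ring
      _ = _ := by
          rw [setLIntegral_Ioi_expMeasure_exp hrt.le (by positivity) hab,
            ← ENNReal.ofReal_mul (by positivity)]
          congr 3
          ring
  change ((expMeasure rG).prod (expMeasure rt)).prod (expMeasure rl)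
    {p | p.1 ∈ {q : ℝ × ℝ | a + b * q.1 < q.2} ∧ c + d * p.1.2 < p.2} = _
  rw [Measure.prod_setOf_mem_and_lt _ _ (c := fun q : ℝ × ℝ => c + d * q.2) (by fun_prop)
      (measurableSet_lt (by fun_prop) measurable_snd),
    setLIntegral_prod_setOf_lt _ _ (c := fun g : ℝ => a + b * g)
      (F := fun q => expMeasure rl (Ioi (c + d * q.2))) (by fun_prop)
      ((measurable_measure_Ioi _).comp (by fun_prop)),
    lintegral_congr_ae ((ae_pos_expMeasure _).mono fun g hg => hinner g hg.le),
    lintegral_const_mul _ (by fun_prop), lintegral_expMeasure_exp hrG.le (by positivity),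
    ← ENNReal.ofReal_mul (by positivity), mul_assoc]

end ProbabilityTheory

theorem prob_theta1_no_is_general
    {Ω' : Type*} [MeasurableSpace Ω'] (μ : Measure Ω') [IsProbabilityMeasure μ]
    (X : Fin 3 → Ω' → ℝ) (Omt Oml OmI βl βt ρ ε at_ : ℝ)
    (hOmt : 0 < Omt) (hOml : 0 < Oml) (hOmI : 0 < OmI)
    (hβl : 0 < βl) (hβt : 0 < βt) (hρ : 0 < ρ) (hε : 0 < ε) (hat : 0 < at_)
    (hindep : iIndepFun X μ)
    (hHt : Measure.map (X 0) μ = expMeasure (1 / Omt))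
    (hHl : Measure.map (X 1) μ = expMeasure (1 / Oml))
    (hG : Measure.map (X 2) μ = expMeasure (1 / OmI)) :
    (μ {ω | X 0 ω > βt * (ε * ρ * X 2 ω + 1) ∧
            X 1 ω > βl * (ρ * at_ * X 0 ω + 1)}).toReal =
      exp (-βl / Oml - βt * ((Oml + ρ * βl * at_ * Omt) / (Oml * Omt))) /
        (((Oml + ρ * βl * at_ * Omt) / (Oml * Omt)) * Omt *
          (1 + ε * ρ * βt * ((Oml + ρ * βl * at_ * Omt) / (Oml * Omt)) * OmI)) := by
  have hrate : 1 / Omt + 1 / Oml * (βl * ρ * at_) = (Oml + ρ * βl * at_ * Omt) / (Oml * Omt) := by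
    field_simp
  set φ := (Oml + ρ * βl * at_ * Omt) / (Oml * Omt)
  have hX : ∀ i, AEMeasurable (X i) μ := by
    intro i
    fin_cases i
    exacts [aemeasurable_of_map_eq_expMeasure (by positivity) hHt,
      aemeasurable_of_map_eq_expMeasure (by positivity) hHl,
      aemeasurable_of_map_eq_expMeasure (by positivity) hG]
  have hlaw := hindep.map_prodMk_prodMk_eq_prod hX (i := 2) (j := 0) (k := 1)
    (by decide) (by decide) (by decide)
  rw [hG, hHt, hHl] at hlaw
  have hevent :
      μ {ω | X 0 ω > βt * (ε * ρ * X 2 ω + 1) ∧ X 1 ω > βl * (ρ * at_ * X 0 ω + 1)} =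
        μ.map (fun ω => ((X 2 ω, X 0 ω), X 1 ω))
          {p | βt + βt * ε * ρ * p.1.1 < p.1.2 ∧ βl + βl * ρ * at_ * p.1.2 < p.2} := by
    have hmeas : MeasurableSet
        {p : (ℝ × ℝ) × ℝ | βt + βt * ε * ρ * p.1.1 < p.1.2 ∧ βl + βl * ρ * at_ * p.1.2 < p.2} :=
      by measurability
    rw [Measure.map_apply_of_aemeasurable (((hX 2).prodMk (hX 0)).prodMk (hX 1)) hmeas]
    congr 1 with ω
    simp only [mem_ofPred_eq, mem_preimage, gt_iff_lt]
    ring_nf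
  rw [hevent, hlaw, expMeasure_prod_prod_setOf_add_mul_lt (by positivity) (by positivity)
      (by positivity) (by positivity) (by positivity) (by positivity) (by positivity),
    ENNReal.toReal_ofReal (by positivity), hrate,
    show -(1 / Oml * βl + φ * βt) = -βl / Oml - βt * φ by ring]
  field_simp

/-- Θ₁ of Appendix B with zero inter-antenna interference: joint decoding probability
at the relay with residual imperfect-SIC interference. -/
theorem prob_theta1_no_is
    {Ω' : Type*} [MeasurableSpace Ω'] (μ : Measure Ω') [IsProbabilityMeasure μ]
    (X : Fin 3 → Ω' → ℝ) (Omt Oml OmI βl βt ρ ε at_ : ℝ)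
    (hOmt : 0 < Omt) (hOml : 0 < Oml) (hOmI : 0 < OmI)
    (hβl : 0 < βl) (hβt : 0 < βt) (hρ : 0 < ρ) (hε : 0 < ε) (hat : 0 < at_)
    (hmeas : ∀ i, Measurable (X i))
    (hindep : iIndepFun X μ)
    (hHt : Measure.map (X 0) μ = expMeasure (1 / Omt))
    (hHl : Measure.map (X 1) μ = expMeasure (1 / Oml))
    (hG : Measure.map (X 2) μ = expMeasure (1 / OmI)) :
    (μ {ω | X 0 ω > βt * (ε * ρ * X 2 ω + 1) ∧
            X 1 ω > βl * (ρ * at_ * X 0 ω + 1)}).toReal =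
      exp (-βl / Oml - βt * ((Oml + ρ * βl * at_ * Omt) / (Oml * Omt))) /
        (((Oml + ρ * βl * at_ * Omt) / (Oml * Omt)) * Omt *
          (1 + ε * ρ * βt * ((Oml + ρ * βl * at_ * Omt) / (Oml * Omt)) * OmI)) :=
  prob_theta1_no_is_general μ X Omt Oml OmI βl βt ρ ε at_ hOmt hOml hOmI hβl hβt hρ hε hat hindep
    hHt hHl hG
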